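/- arXiv:math/0102232 — 3 statements merged into one kernel-verified Lean document; each statement's English description precedes it below -/
import Mathlib

section
/- Let g ∈ ℝ[X] be a monic polynomial of degree n − 1 ≥ 2 with n − 1 distinct real roots α₁ < ⋯ < α_{n−1}, and let f₀ ∈ ℝ[X] satisfy f₀' = g. Define m := max{ f₀(α_{n−1−2i}) : 0 ≤ i ≤ (n−2)/2 } and M := min{ f₀(α_{n−2−2i}) : 0 ≤ i ≤ (n−3)/2 }. Then for c ∈ ℝ, the polynomial f₀ − c has n distinct real roots if and only if m < c < M. -/
open Polynomial Set Filter

def RootPiece {N : ℕ} (α : Fin N → ℝ) (k : ℕ) : Set ℝ :=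
  {x | ∀ i : Fin N, ((i : ℕ) < k → α i ≤ x) ∧ (k ≤ (i : ℕ) → x ≤ α i)}

lemma convex_rootPiece {N : ℕ} (α : Fin N → ℝ) (k : ℕ) : Convex ℝ (RootPiece α k) := by
  intro x hx y hy a b ha hb hab
  refine fun i => ⟨fun h => ?_, fun h => ?_⟩
  · have h1 := (hx i).1 h; have h2 := (hy i).1 h
    have hid : a * α i + b * α i = α i := by rw [← add_mul, hab, one_mul]
    simp only [smul_eq_mul]
    nlinarith [mul_nonneg ha (sub_nonneg.2 h1), mul_nonneg hb (sub_nonneg.2 h2)]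
  · have h1 := (hx i).2 h; have h2 := (hy i).2 h
    have hid : a * α i + b * α i = α i := by rw [← add_mul, hab, one_mul]
    simp only [smul_eq_mul]
    nlinarith [mul_nonneg ha (sub_nonneg.2 h1), mul_nonneg hb (sub_nonneg.2 h2)]

lemma interior_rootPiece_ne {N : ℕ} {α : Fin N → ℝ} {k : ℕ} {x : ℝ}
    (hx : x ∈ interior (RootPiece α k)) (i : Fin N) : x ≠ α i := by
  rcases Metric.isOpen_iff.1 isOpen_interior x hx with ⟨ε, hε, hball⟩
  intro hxi
  rcases lt_or_ge (i : ℕ) k with h | h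
  · have hmem : x - ε / 2 ∈ RootPiece α k := by
      refine interior_subset (hball ?_)
      simp only [Metric.mem_ball, Real.dist_eq]
      rw [show x - ε / 2 - x = -(ε / 2) by ring, abs_neg, abs_of_pos (by linarith)]
      linarith
    have := (hmem i).1 h
    rw [← hxi] at this; linarith
  · have hmem : x + ε / 2 ∈ RootPiece α k := by
      refine interior_subset (hball ?_)
      simp only [Metric.mem_ball, Real.dist_eq]
      rw [show x + ε / 2 - x = ε / 2 by ring, abs_of_pos (by linarith)]
      linarith
    have := (hmem i).2 h
    rw [← hxi] at this; linarith

lemma mono_or_anti_rootPiece {N : ℕ} (α : Fin N → ℝ) (g p : Polynomial ℝ)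
    (hgroots : ∀ x : ℝ, (∀ i, x ≠ α i) → eval x g ≠ 0)
    (hpd : derivative p = g) (k : ℕ) :
    StrictMonoOn (fun x => eval x p) (RootPiece α k) ∨
      StrictAntiOn (fun x => eval x p) (RootPiece α k) := by
  have hconv := convex_rootPiece α k
  have hne : ∀ x ∈ interior (RootPiece α k), eval x g ≠ 0 :=
    fun x hx => hgroots x (fun i => interior_rootPiece_ne hx i)
  have hcont : ContinuousOn (fun x => eval x p) (RootPiece α k) :=
    (Polynomial.continuous p).continuousOn
  have hderiv : ∀ x : ℝ, deriv (fun x => eval x p) x = eval x g := fun x => by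
    rw [Polynomial.deriv, hpd]
  by_cases hpos : ∀ x ∈ interior (RootPiece α k), 0 < eval x g
  · exact Or.inl (strictMonoOn_of_deriv_pos hconv hcont
      (fun x hx => by rw [hderiv]; exact hpos x hx))
  · push_neg at hpos
    obtain ⟨x0, hx0, hle⟩ := hpos
    have hx0neg : eval x0 g < 0 := lt_of_le_of_ne hle (hne x0 hx0)
    have hneg : ∀ x ∈ interior (RootPiece α k), eval x g < 0 := by
      intro x hx
      by_contra hcon
      push_neg at hcon
      obtain ⟨y, hy, hy0⟩ := (hconv.interior.isPreconnected).intermediate_value₂ hx0 hx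
        ((Polynomial.continuous g).continuousOn) continuousOn_const hx0neg.le hcon
      exact hne y hy hy0
    exact Or.inr (strictAntiOn_of_deriv_neg hconv hcont
      (fun x hx => by rw [hderiv]; exact hneg x hx))

lemma le_iff_lt_card_filter {N : ℕ} {α : Fin N → ℝ} (hα : StrictMono α) (t : ℝ) (i : Fin N) :
    α i ≤ t ↔ (i : ℕ) < (Finset.univ.filter fun j => α j ≤ t).card := by
  constructor
  · intro h
    have hsub : Finset.Iic i ⊆ Finset.univ.filter fun j => α j ≤ t := by
      intro j hj
      simp only [Finset.mem_filter, Finset.mem_univ, true_and]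
      exact le_trans (hα.monotone (Finset.mem_Iic.1 hj)) h
    have := Finset.card_le_card hsub
    rw [Fin.card_Iic] at this
    omega
  · intro h
    by_contra hcon
    push_neg at hcon
    have hsub : (Finset.univ.filter fun j => α j ≤ t) ⊆ Finset.Iio i := by
      intro j hj
      simp only [Finset.mem_filter, Finset.mem_univ, true_and] at hj
      exact Finset.mem_Iio.2 (hα.lt_iff_lt.1 (lt_of_le_of_lt hj hcon))
    have := Finset.card_le_card hsub
    rw [Fin.card_Iio] at this
    omega

lemma mem_rootPiece_card_filter {N : ℕ} {α : Fin N → ℝ} (hα : StrictMono α) (t : ℝ) :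
    t ∈ RootPiece α (Finset.univ.filter fun j => α j ≤ t).card := by
  intro i
  constructor
  · intro h
    exact (le_iff_lt_card_filter hα t i).2 h
  · intro h
    by_contra hcon
    push_neg at hcon
    have := (le_iff_lt_card_filter hα t i).1 hcon.le
    omega
set_option maxHeartbeats 2000000 in
/-- Let `g` be monic of degree `n - 1 ≥ 2` with distinct real roots
`α₁ < ⋯ < α_{n-1}` (indexed here 0-based by `Fin (n-1)` via a strictly monotone `α`),
and let `f₀` be an antiderivative of `g`.  With `m` the maximum of the values of `f₀`
at its local minima (the roots `α_{n-1-2i}`, i.e. 0-based indices `j ≡ n (mod 2)`) and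
`M` the minimum of the values at its local maxima (the roots `α_{n-2-2i}`, 0-based
indices `j ≢ n (mod 2)`), the polynomial `f₀ - c` has `n` distinct real roots if and
only if `m < c < M`. -/
theorem antiderivative_totally_real_separable_iff
    (n : ℕ) (hn : 3 ≤ n) (α : Fin (n - 1) → ℝ) (hα : StrictMono α)
    (g f₀ : Polynomial ℝ)
    (hg : g = ∏ i : Fin (n - 1), (X - C (α i)))
    (hf₀ : derivative f₀ = g)
    (m M : ℝ)
    (hm : IsGreatest ((fun j => f₀.eval (α j)) '' {j : Fin (n - 1) | (j : ℕ) % 2 = n % 2}) m)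
    (hM : IsLeast ((fun j => f₀.eval (α j)) '' {j : Fin (n - 1) | (j : ℕ) % 2 ≠ n % 2}) M) :
    ∀ c : ℝ, (((f₀ - C c).roots).card = n ∧ (f₀ - C c).roots.Nodup) ↔ (m < c ∧ c < M) := by
  classical
  obtain ⟨N, rfl⟩ : ∃ N, n = N + 1 := ⟨n - 1, by omega⟩
  have hN : 2 ≤ N := by omega
  intro c
  set p : Polynomial ℝ := f₀ - C c with hpdef
  -- basic degree facts
  have hgmonic : g.Monic := by
    rw [hg]; exact monic_prod_of_monic _ _ fun i _ => monic_X_sub_C (α i)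
  have hgdeg : g.natDegree = N := by
    rw [hg, natDegree_prod_of_monic _ _ fun i _ => monic_X_sub_C (α i)]
    simp
  have hgne : g ≠ 0 := hgmonic.ne_zero
  have hf₀ne0 : f₀.natDegree ≠ 0 := by
    intro h
    rw [derivative_of_natDegree_zero h] at hf₀
    exact hgne hf₀.symm
  have hlow : N < f₀.natDegree := by
    have := natDegree_derivative_lt hf₀ne0
    rwa [hf₀, hgdeg] at this
  have hf₀deg : f₀.natDegree = N + 1 := by
    by_contra hcon
    have hf₀ne : f₀ ≠ 0 := fun h => hf₀ne0 (by rw [h, natDegree_zero])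
    have h1 : g.coeff (f₀.natDegree - 1) = 0 :=
      coeff_eq_zero_of_natDegree_lt (by omega)
    rw [← hf₀, coeff_derivative] at h1
    have hd : f₀.natDegree - 1 + 1 = f₀.natDegree := by omega
    rw [hd] at h1
    rcases mul_eq_zero.1 h1 with h | h
    · exact leadingCoeff_ne_zero.2 hf₀ne h
    · have : (0:ℝ) < (f₀.natDegree - 1 : ℕ) + 1 := by positivity
      linarith [this.ne' h]
  have hpd : derivative p = g := by
    rw [hpdef, derivative_sub, derivative_C, sub_zero, hf₀]
  have hpdeg : p.natDegree = N + 1 := by rw [hpdef, natDegree_sub_C, hf₀deg]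
  have hpne : p ≠ 0 := by
    intro h; rw [h, natDegree_zero] at hpdeg; omega
  have hg1 : g.coeff N = 1 := by
    have := hgmonic.coeff_natDegree; rwa [hgdeg] at this
  have hplead_mul : p.leadingCoeff * ((N:ℝ) + 1) = 1 := by
    have h := coeff_derivative f₀ N
    rw [hf₀, hg1] at h
    have hcoeff : p.coeff (N + 1) = f₀.coeff (N + 1) := by
      simp [hpdef, coeff_sub, coeff_C]
    rw [Polynomial.leadingCoeff, hpdeg, hcoeff]
    linarith
  have hplead_pos : 0 < p.leadingCoeff := by
    have h1 : (0:ℝ) < (N:ℝ) + 1 := by positivity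
    nlinarith
  have hdegpos : 0 < p.degree := natDegree_pos_iff_degree_pos.1 (by omega)
  have hpeval : ∀ x : ℝ, eval x p = eval x f₀ - c := by intro x; simp [hpdef]
  have hgroots : ∀ x : ℝ, (∀ i : Fin (N + 1 - 1), x ≠ α i) → eval x g ≠ 0 := by
    intro x hx
    rw [hg, eval_prod]
    refine Finset.prod_ne_zero_iff.2 fun i _ => ?_
    simp only [eval_sub, eval_X, eval_C, sub_ne_zero]
    exact hx i
  have hMA : ∀ k : ℕ, StrictMonoOn (fun x => eval x p) (RootPiece α k) ∨
      StrictAntiOn (fun x => eval x p) (RootPiece α k) :=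
    fun k => mono_or_anti_rootPiece α g p hgroots hpd k
  have hmemα : ∀ (j : Fin (N + 1 - 1)) (k : ℕ), (j:ℕ) ≤ k → k ≤ (j:ℕ) + 1 →
      α j ∈ RootPiece α k := by
    intro j k h1 h2 i
    refine ⟨fun h => hα.monotone ?_, fun h => hα.monotone ?_⟩
    · rw [Fin.le_def]; omega
    · rw [Fin.le_def]; omega
  have hmonoN : StrictMonoOn (fun x => eval x p) (RootPiece α N) := by
    refine strictMonoOn_of_deriv_pos (convex_rootPiece α N)
      (Polynomial.continuous p).continuousOn ?_
    intro x hx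
    rw [Polynomial.deriv, hpd, hg, eval_prod]
    refine Finset.prod_pos fun i _ => ?_
    simp only [eval_sub, eval_X, eval_C, sub_pos]
    have h1 : α i ≤ x := (interior_subset hx i).1 (by have := i.isLt; omega)
    exact lt_of_le_of_ne h1 (Ne.symm (interior_rootPiece_ne hx i))
  have hcontp : Continuous fun x : ℝ => eval x p := Polynomial.continuous p
  constructor
  · rintro ⟨hcard, hnodup⟩
    -- p does not vanish at critical points
    have hpne0 : ∀ j : Fin (N + 1 - 1), eval (α j) p ≠ 0 := by
      intro j h0
      obtain ⟨q, hq⟩ := dvd_iff_isRoot.2 h0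
      have hgα : eval (α j) g = 0 := by
        rw [hg, eval_prod]
        exact Finset.prod_eq_zero (Finset.mem_univ j) (by simp)
      have h2 : g = q + (X - C (α j)) * derivative q := by
        rw [← hpd, hq, derivative_mul, derivative_sub, derivative_X, derivative_C,
          sub_zero, one_mul]
      rw [h2] at hgα
      have hq0 : eval (α j) q = 0 := by simpa using hgα
      obtain ⟨s, hs⟩ := dvd_iff_isRoot.2 hq0
      have hdvd2 : (X - C (α j)) ^ 2 ∣ p := ⟨s, by rw [hq, hs]; ring⟩
      have h2' : 2 ≤ rootMultiplicity (α j) p := (le_rootMultiplicity_iff hpne).2 hdvd2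
      have := Multiset.nodup_iff_count_le_one.1 hnodup (α j)
      rw [count_roots] at this
      omega
    set T := p.roots.toFinset with hT
    have hTcard : T.card = N + 1 := by
      rw [hT, Multiset.toFinset_card_eq_card_iff_nodup.2 hnodup, hcard]
    have hψle : ∀ t : ℝ, (Finset.univ.filter fun j : Fin (N + 1 - 1) => α j ≤ t).card ≤ N := by
      intro t
      have h := Finset.card_filter_le Finset.univ (fun j : Fin (N + 1 - 1) => α j ≤ t)
      simp only [Finset.card_univ, Fintype.card_fin] at h
      omega
    set F : ℝ → Fin (N + 1) := fun t =>
      ⟨(Finset.univ.filter fun j => α j ≤ t).card, by have := hψle t; omega⟩ with hF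
    have hinj : Set.InjOn F T := by
      intro t1 h1 t2 h2 hFeq
      have hr1 : eval t1 p = 0 := (mem_roots'.1 (Multiset.mem_toFinset.1 h1)).2
      have hr2 : eval t2 p = 0 := (mem_roots'.1 (Multiset.mem_toFinset.1 h2)).2
      have hval : (Finset.univ.filter fun j => α j ≤ t1).card
          = (Finset.univ.filter fun j => α j ≤ t2).card := by
        have := congrArg Fin.val hFeq
        simpa [hF] using this
      have hm1 := mem_rootPiece_card_filter hα t1
      have hm2 := mem_rootPiece_card_filter hα t2
      rw [← hval] at hm2
      rcases hMA ((Finset.univ.filter fun j => α j ≤ t1).card) with hmono | hanti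
      · exact hmono.injOn hm1 hm2 (by rw [hr1, hr2])
      · exact hanti.injOn hm1 hm2 (by rw [hr1, hr2])
    have hsurj : ∀ k : Fin (N + 1), ∃ t, eval t p = 0 ∧ t ∈ RootPiece α (k : ℕ) := by
      have himg : Finset.image F T = Finset.univ := by
        apply Finset.eq_univ_of_card
        rw [Finset.card_image_of_injOn hinj, hTcard, Fintype.card_fin]
      intro k
      have hk : k ∈ Finset.image F T := by rw [himg]; exact Finset.mem_univ k
      obtain ⟨t, ht, hFt⟩ := Finset.mem_image.1 hk
      refine ⟨t, (mem_roots'.1 (Multiset.mem_toFinset.1 ht)).2, ?_⟩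
      have hval : (Finset.univ.filter fun j => α j ≤ t).card = (k : ℕ) := by
        have := congrArg Fin.val hFt
        simpa [hF] using this
      rw [← hval]
      exact mem_rootPiece_card_filter hα t
    -- base sign at the largest critical point
    have hbase : eval (α ⟨N - 1, by omega⟩) p < 0 := by
      obtain ⟨t, ht0, htm⟩ := hsurj ⟨N, by omega⟩
      have hmem : α ⟨N - 1, by omega⟩ ∈ RootPiece α N := by
        intro i
        refine ⟨fun h => hα.monotone ?_, fun h => absurd h (by have := i.isLt; omega)⟩
        rw [Fin.le_def]
        have := i.isLt; simp; omega
      have hle : α ⟨N - 1, by omega⟩ ≤ t := (htm ⟨N - 1, by omega⟩).1 (by simp; omega)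
      have hne' : α ⟨N - 1, by omega⟩ ≠ t := fun h => hpne0 _ (h ▸ ht0)
      have := hmonoN hmem htm (lt_of_le_of_ne hle hne')
      simpa only [ht0] using this
    -- consecutive signs are opposite
    have hstep : ∀ j : Fin (N + 1 - 1), ∀ hj1 : (j:ℕ) + 1 < N,
        eval (α j) p < 0 ∧ 0 < eval (α ⟨(j:ℕ) + 1, by omega⟩) p ∨
        0 < eval (α j) p ∧ eval (α ⟨(j:ℕ) + 1, by omega⟩) p < 0 := by
      intro j hj1
      set j' : Fin (N + 1 - 1) := ⟨(j:ℕ) + 1, by omega⟩ with hj'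
      obtain ⟨t, ht0, htm⟩ := hsurj ⟨(j:ℕ) + 1, by omega⟩
      have htm' : t ∈ RootPiece α ((j:ℕ) + 1) := htm
      have hαj : α j ∈ RootPiece α ((j:ℕ) + 1) := hmemα j _ (by omega) (by omega)
      have hαj' : α j' ∈ RootPiece α ((j:ℕ) + 1) := hmemα j' _ (le_of_eq rfl) (by simp [hj'])
      have hlt1 : α j < t :=
        lt_of_le_of_ne ((htm' j).1 (by omega)) (fun h => hpne0 j (h ▸ ht0))
      have hlt2 : t < α j' :=
        lt_of_le_of_ne ((htm' j').2 (le_of_eq rfl)) (fun h => hpne0 j' (h ▸ ht0))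
      rcases hMA ((j:ℕ) + 1) with hmono | hanti
      · left
        constructor
        · have := hmono hαj htm' hlt1; simpa only [ht0] using this
        · have := hmono htm' hαj' hlt2; simpa only [ht0] using this
      · right
        constructor
        · have := hanti hαj htm' hlt1; simpa only [ht0] using this
        · have := hanti htm' hαj' hlt2; simpa only [ht0] using this
    -- propagate signs by induction
    have hsigns : ∀ d : ℕ, d ≤ N - 1 →
        (d % 2 = 0 → eval (α ⟨N - 1 - d, by omega⟩) p < 0) ∧
        (d % 2 = 1 → 0 < eval (α ⟨N - 1 - d, by omega⟩) p) := by
      intro d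
      induction d with
      | zero => exact fun _ => ⟨fun _ => hbase, fun h => by omega⟩
      | succ d ih =>
        intro hd
        have hihd := ih (by omega)
        have hj1 : (N - 1 - (d + 1)) + 1 < N := by omega
        have hstepj := hstep ⟨N - 1 - (d + 1), by omega⟩ hj1
        have hidx : (⟨(N - 1 - (d + 1)) + 1, by omega⟩ : Fin (N + 1 - 1))
            = ⟨N - 1 - d, by omega⟩ := by
          simp only [Fin.mk.injEq]; omega
        rw [hidx] at hstepj
        constructor
        · intro hpar
          have hnext := hihd.2 (by omega)
          rcases hstepj with ⟨h1, h2⟩ | ⟨h1, h2⟩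
          · exact h1
          · exact absurd h2 (by simp only [not_lt]; exact hnext.le)
        · intro hpar
          have hnext := hihd.1 (by omega)
          rcases hstepj with ⟨h1, h2⟩ | ⟨h1, h2⟩
          · exact absurd h2 (by simp only [not_lt]; exact hnext.le)
          · exact h1
    have hminlt : ∀ j : Fin (N + 1 - 1), (j:ℕ) % 2 = (N + 1) % 2 → eval (α j) p < 0 := by
      intro j hj
      have hjlt : (j:ℕ) < N := by have := j.isLt; omega
      have hd : N - 1 - (j:ℕ) ≤ N - 1 := by omega
      have hpar : (N - 1 - (j:ℕ)) % 2 = 0 := by omega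
      have := (hsigns _ hd).1 hpar
      have hidx : (⟨N - 1 - (N - 1 - (j:ℕ)), by omega⟩ : Fin (N + 1 - 1)) = j := by
        apply Fin.ext; simp; omega
      rwa [hidx] at this
    have hmaxgt : ∀ j : Fin (N + 1 - 1), (j:ℕ) % 2 ≠ (N + 1) % 2 → 0 < eval (α j) p := by
      intro j hj
      have hjlt : (j:ℕ) < N := by have := j.isLt; omega
      have hd : N - 1 - (j:ℕ) ≤ N - 1 := by omega
      have hpar : (N - 1 - (j:ℕ)) % 2 = 1 := by omega
      have := (hsigns _ hd).2 hpar
      have hidx : (⟨N - 1 - (N - 1 - (j:ℕ)), by omega⟩ : Fin (N + 1 - 1)) = j := by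
        apply Fin.ext; simp; omega
      rwa [hidx] at this
    constructor
    · obtain ⟨j₀, hj₀, hmj₀⟩ := hm.1
      have := hminlt j₀ hj₀
      rw [hpeval] at this
      rw [← hmj₀]
      simpa using by linarith [this]
    · obtain ⟨j₁, hj₁, hMj₁⟩ := hM.1
      have := hmaxgt j₁ hj₁
      rw [hpeval] at this
      rw [← hMj₁]
      simpa using by linarith [this]
  · rintro ⟨hmc, hcM⟩
    have hsignmin : ∀ j : Fin (N + 1 - 1), (j:ℕ) % 2 = (N + 1) % 2 → eval (α j) p < 0 := by
      intro j h
      have hub : f₀.eval (α j) ≤ m := hm.2 ⟨j, h, rfl⟩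
      rw [hpeval]; linarith
    have hsignmax : ∀ j : Fin (N + 1 - 1), (j:ℕ) % 2 ≠ (N + 1) % 2 → 0 < eval (α j) p := by
      intro j h
      have hlb : M ≤ f₀.eval (α j) := hM.2 ⟨j, h, rfl⟩
      rw [hpeval]; linarith
    have hex : ∀ k : ℕ, k ≤ N → ∃ t, eval t p = 0 ∧
        (∀ i : Fin (N + 1 - 1), (i:ℕ) < k → α i < t) ∧
        (∀ i : Fin (N + 1 - 1), k ≤ (i:ℕ) → t < α i) := by
      intro k hk
      rcases Nat.eq_zero_or_pos k with rfl | hk0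
      · -- leftmost root
        set j0 : Fin (N + 1 - 1) := ⟨0, by omega⟩ with hj0
        have hj0v : (j0:ℕ) = 0 := rfl
        set q : Polynomial ℝ := p.comp (-X) with hqdef
        have hqev : ∀ x : ℝ, eval x q = eval (-x) p := by
          intro x; rw [hqdef, eval_comp]; simp
        have hqdeg : q.natDegree = N + 1 := by
          rw [hqdef, natDegree_comp]; simp [hpdeg]
        have hqne : q ≠ 0 := by
          intro h; rw [h, natDegree_zero] at hqdeg; omega
        have hqdegpos : 0 < q.degree := natDegree_pos_iff_degree_pos.1 (by omega)
        have hqlead : q.leadingCoeff = p.leadingCoeff * (-1) ^ (N + 1) := by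
          rw [hqdef, leadingCoeff_comp (by simp : ((-X : Polynomial ℝ).natDegree ≠ 0))]
          simp [hpdeg]
        by_cases hNpar : (N + 1) % 2 = 0
        · have h0 : eval (α j0) p < 0 := hsignmin j0 (by rw [hj0v]; omega)
          have hl : 0 < q.leadingCoeff := by
            rw [hqlead, (Nat.even_iff.2 hNpar).neg_one_pow, mul_one]
            exact hplead_pos
          have htop := tendsto_atTop_of_leadingCoeff_nonneg q hqdegpos hl.le
          obtain ⟨x, hx0, hxgt⟩ :=
            ((htop.eventually_gt_atTop 0).and (Filter.eventually_gt_atTop (-(α j0)))).exists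
          rw [hqev] at hx0
          have hlt : -x < α j0 := by linarith
          obtain ⟨t, htI, ht0⟩ := intermediate_value_Ioo' hlt.le hcontp.continuousOn
            (Set.mem_Ioo.2 ⟨h0, hx0⟩)
          refine ⟨t, ht0, fun i hi => absurd hi (by omega), fun i _ => ?_⟩
          exact lt_of_lt_of_le htI.2 (hα.monotone (by rw [Fin.le_def, hj0v]; omega))
        · have h0 : 0 < eval (α j0) p := hsignmax j0 (by rw [hj0v]; omega)
          have hl : q.leadingCoeff < 0 := by
            rw [hqlead, (Nat.odd_iff.2 (by omega)).neg_one_pow, mul_neg_one]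
            linarith
          have hbot := tendsto_atBot_of_leadingCoeff_nonpos q hqdegpos hl.le
          obtain ⟨x, hx0, hxgt⟩ :=
            ((hbot.eventually_lt_atBot 0).and (Filter.eventually_gt_atTop (-(α j0)))).exists
          rw [hqev] at hx0
          have hlt : -x < α j0 := by linarith
          obtain ⟨t, htI, ht0⟩ := intermediate_value_Ioo hlt.le hcontp.continuousOn
            (Set.mem_Ioo.2 ⟨hx0, h0⟩)
          refine ⟨t, ht0, fun i hi => absurd hi (by omega), fun i _ => ?_⟩
          exact lt_of_lt_of_le htI.2 (hα.monotone (by rw [Fin.le_def, hj0v]; omega))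
      rcases eq_or_lt_of_le hk with heq | hkN
      · -- rightmost root
        subst heq
        set jN : Fin (k + 1 - 1) := ⟨k - 1, by omega⟩ with hjN
        have hjNv : (jN:ℕ) = k - 1 := rfl
        have h0 : eval (α jN) p < 0 := hsignmin jN (by rw [hjNv]; omega)
        have htop := tendsto_atTop_of_leadingCoeff_nonneg p hdegpos hplead_pos.le
        obtain ⟨x, hx0, hxgt⟩ :=
          ((htop.eventually_gt_atTop 0).and (Filter.eventually_gt_atTop (α jN))).exists
        obtain ⟨t, htI, ht0⟩ := intermediate_value_Ioo hxgt.le hcontp.continuousOn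
          (Set.mem_Ioo.2 ⟨h0, hx0⟩)
        refine ⟨t, ht0, fun i hi => ?_, fun i hi => absurd hi (by have := i.isLt; omega)⟩
        exact lt_of_le_of_lt (hα.monotone (by rw [Fin.le_def, hjNv]; omega)) htI.1
      · -- middle root
        set j : Fin (N + 1 - 1) := ⟨k - 1, by omega⟩ with hjd
        set j' : Fin (N + 1 - 1) := ⟨k, by omega⟩ with hjd'
        have hjv : (j:ℕ) = k - 1 := rfl
        have hj'v : (j':ℕ) = k := rfl
        have hαlt : α j < α j' := hα (by rw [Fin.lt_def, hjv, hj'v]; omega)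
        have hpar : ((j:ℕ) % 2 = (N + 1) % 2 ∧ (j':ℕ) % 2 ≠ (N + 1) % 2) ∨
            ((j:ℕ) % 2 ≠ (N + 1) % 2 ∧ (j':ℕ) % 2 = (N + 1) % 2) := by
          rw [hjv, hj'v]
          omega
        rcases hpar with ⟨h1, h2⟩ | ⟨h1, h2⟩
        · have hs1 := hsignmin j h1
          have hs2 := hsignmax j' h2
          obtain ⟨t, htI, ht0⟩ := intermediate_value_Ioo hαlt.le hcontp.continuousOn
            (Set.mem_Ioo.2 ⟨hs1, hs2⟩)
          refine ⟨t, ht0, fun i hi => ?_, fun i hi => ?_⟩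
          · exact lt_of_le_of_lt (hα.monotone (by rw [Fin.le_def, hjv]; omega)) htI.1
          · exact lt_of_lt_of_le htI.2 (hα.monotone (by rw [Fin.le_def, hj'v]; omega))
        · have hs1 := hsignmax j h1
          have hs2 := hsignmin j' h2
          obtain ⟨t, htI, ht0⟩ := intermediate_value_Ioo' hαlt.le hcontp.continuousOn
            (Set.mem_Ioo.2 ⟨hs2, hs1⟩)
          refine ⟨t, ht0, fun i hi => ?_, fun i hi => ?_⟩
          · exact lt_of_le_of_lt (hα.monotone (by rw [Fin.le_def, hjv]; omega)) htI.1
          · exact lt_of_lt_of_le htI.2 (hα.monotone (by rw [Fin.le_def, hj'v]; omega))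
    have hex' : ∀ k : Fin (N + 1), ∃ t, eval t p = 0 ∧
        (∀ i : Fin (N + 1 - 1), (i:ℕ) < (k:ℕ) → α i < t) ∧
        (∀ i : Fin (N + 1 - 1), (k:ℕ) ≤ (i:ℕ) → t < α i) :=
      fun k => hex k (Nat.lt_succ_iff.1 k.isLt)
    choose r hr0 hrlt hrgt using hex'
    have hrmono : StrictMono r := by
      intro k1 k2 hlt
      have hlt' : (k1:ℕ) < (k2:ℕ) := hlt
      have hk2 := k2.isLt
      have h1 : r k1 < α ⟨(k1:ℕ), by omega⟩ := hrgt k1 ⟨(k1:ℕ), by omega⟩ (le_of_eq rfl)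
      have h2 : α ⟨(k1:ℕ), by omega⟩ < r k2 := hrlt k2 ⟨(k1:ℕ), by omega⟩ (by simpa using hlt')
      linarith
    have himg : Finset.univ.image r ⊆ p.roots.toFinset := by
      intro x hx
      obtain ⟨k, _, rfl⟩ := Finset.mem_image.1 hx
      rw [Multiset.mem_toFinset, mem_roots']
      exact ⟨hpne, hr0 k⟩
    have hN1le : N + 1 ≤ p.roots.toFinset.card := by
      have h := Finset.card_le_card himg
      rwa [Finset.card_image_of_injective _ hrmono.injective, Finset.card_univ,
        Fintype.card_fin] at h
    have hle2 : p.roots.toFinset.card ≤ Multiset.card p.roots := Multiset.toFinset_card_le _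
    have hcard' : Multiset.card p.roots ≤ N + 1 := by
      have := p.card_roots'
      rwa [hpdeg] at this
    refine ⟨by omega, Multiset.toFinset_card_eq_card_iff_nodup.1 (by omega)⟩
end

section
/- For fixed integers a_n, a_{n−1}, a_{n−2} with a_n ≠ 0 and n ≥ 2, there exist only finitely many polynomials f(X) = Σ_{i=0}^{n} a_i X^i ∈ ℤ[X] (with the prescribed top three coefficients) all of whose roots are real and distinct. -/
/-!
If `f = aₙ Xⁿ + aₙ₋₁ Xⁿ⁻¹ + aₙ₋₂ Xⁿ⁻² + ⋯` has `n` real roots `rᵢ`, Vieta's formulas give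
`∑ rᵢ² = (∑ rᵢ)² - 2 ∑_{i<j} rᵢ rⱼ = (aₙ₋₁ / aₙ)² - 2 aₙ₋₂ / aₙ`, a quantity fixed by the top
three coefficients. As the roots are real, each `rᵢ²` is at most this sum, so all roots lie in a
fixed disc. This bounds the Mahler measure `|aₙ| ∏ max 1 |rᵢ|` of `f`, and Northcott's theorem
leaves only finitely many such integer polynomials of degree `n`.
-/

open Polynomial

namespace Multiset

variable {R : Type*} [CommSemiring R]

theorem esymm_one (s : Multiset R) : s.esymm 1 = s.sum := by
  simp [esymm, powersetCard_one, map_map]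

theorem esymm_cons_succ (a : R) (s : Multiset R) (k : ℕ) :
    (a ::ₘ s).esymm (k + 1) = s.esymm (k + 1) + a * s.esymm k := by
  simp only [esymm, powersetCard_cons, map_add, sum_add, map_map, Function.comp_def, prod_cons,
    sum_map_mul_left]

theorem sum_sq_eq_sum_map_sq_add_two_mul_esymm_two (s : Multiset R) :
    s.sum ^ 2 = (s.map (· ^ 2)).sum + 2 * s.esymm 2 := by
  induction s using Multiset.induction with
  | empty => simp [esymm, powersetCard_zero_right 1]
  | cons a s ih =>
    rw [sum_cons, map_cons, sum_cons, esymm_cons_succ, esymm_one, add_sq, ih]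
    ring

end Multiset

namespace Polynomial

theorem sum_map_sq_roots_of_card_eq_natDegree {K : Type*} [Field K] {p : K[X]}
    (hroots : p.roots.card = p.natDegree) (hp : 2 ≤ p.natDegree) :
    (p.roots.map (· ^ 2)).sum = (p.coeff (p.natDegree - 1) / p.leadingCoeff) ^ 2
      - 2 * (p.coeff (p.natDegree - 2) / p.leadingCoeff) := by
  have hlead : p.leadingCoeff ≠ 0 := leadingCoeff_ne_zero.2 (ne_zero_of_natDegree_gt hp)
  have hsum := coeff_eq_esymm_roots_of_card hroots (k := p.natDegree - 1) (by omega)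
  have hesymm := coeff_eq_esymm_roots_of_card hroots (k := p.natDegree - 2) (by omega)
  rw [Nat.sub_sub_self (by omega), Multiset.esymm_one] at hsum
  rw [Nat.sub_sub_self hp] at hesymm
  rw [hsum, hesymm]
  simp only [mul_assoc, mul_div_cancel_left₀ _ hlead]
  linear_combination -Multiset.sum_sq_eq_sum_map_sq_add_two_mul_esymm_two p.roots

theorem sq_le_of_mem_roots_of_card_eq_natDegree {p : ℝ[X]}
    (hroots : p.roots.card = p.natDegree) (hp : 2 ≤ p.natDegree) {r : ℝ} (hr : r ∈ p.roots) :
    r ^ 2 ≤ (p.coeff (p.natDegree - 1) / p.leadingCoeff) ^ 2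
      - 2 * (p.coeff (p.natDegree - 2) / p.leadingCoeff) :=
  sum_map_sq_roots_of_card_eq_natDegree hroots hp ▸
    Multiset.single_le_sum (Multiset.forall_mem_map_iff.2 fun _ _ ↦ sq_nonneg _) _
      (Multiset.mem_map_of_mem _ hr)

theorem mahlerMeasure_le_of_norm_roots_le {p : ℂ[X]} {R : ℝ} (h : ∀ z ∈ p.roots, ‖z‖ ≤ R) :
    p.mahlerMeasure ≤ ‖p.leadingCoeff‖ * max 1 R ^ p.natDegree := by
  rw [mahlerMeasure_eq_leadingCoeff_mul_prod_roots]
  gcongr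
  calc (p.roots.map fun z ↦ max 1 ‖z‖).prod ≤ max 1 R ^ p.roots.card := by
        simpa using Multiset.prod_map_le_prod_map₀ _ (fun _ ↦ max 1 R)
          (fun _ _ ↦ zero_le_one.trans (le_max_left _ _)) fun z hz ↦ max_le_max_left 1 (h z hz)
    _ ≤ max 1 R ^ p.natDegree := pow_le_pow_right₀ (le_max_left _ _) (card_roots' p)

theorem mahlerMeasure_map_ofReal_le {p : ℝ[X]} (hp : p.Splits) {R : ℝ}
    (h : ∀ r ∈ p.roots, |r| ≤ R) :
    (p.map Complex.ofRealHom).mahlerMeasure ≤ |p.leadingCoeff| * max 1 R ^ p.natDegree := by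
  have h' : ∀ z ∈ (p.map Complex.ofRealHom).roots, ‖z‖ ≤ R := by
    rw [hp.roots_map]
    exact Multiset.forall_mem_map_iff.2 fun r hr ↦ by simpa using h r hr
  simpa using mahlerMeasure_le_of_norm_roots_le h'

end Polynomial

theorem finite_totally_real_separable_with_fixed_top_coeffs_general
    (n : ℕ) (hn : 2 ≤ n) (an an1 an2 : ℤ) :
    {f : Polynomial ℤ | f.natDegree = n ∧ f.coeff n = an ∧ f.coeff (n - 1) = an1 ∧
      f.coeff (n - 2) = an2 ∧
      ((f.map (Int.castRingHom ℝ)).roots).card = n ∧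
      (f.map (Int.castRingHom ℝ)).roots.Nodup}.Finite := by
  set S : ℝ := ((an1 : ℝ) / an) ^ 2 - 2 * (an2 / an)
  refine (finite_mahlerMeasure_le n (|(an : ℝ)| * max 1 √S ^ n).toNNReal).subset ?_
  rintro f ⟨hdeg, hcn, hc1, hc2, hcard, -⟩
  set p := f.map (Int.castRingHom ℝ)
  have hpdeg : p.natDegree = n := by
    rw [natDegree_map_eq_of_injective (RingHom.injective_int _), hdeg]
  have hlead : p.leadingCoeff = an := by simp [leadingCoeff, hpdeg, p, hcn]
  have hsplit : p.roots.card = p.natDegree := hcard.trans hpdeg.symm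
  have hroots : ∀ r ∈ p.roots, |r| ≤ √S := fun r hr ↦ Real.abs_le_sqrt <| by
    simpa [hpdeg, hlead, p, hc1, hc2] using
      sq_le_of_mem_roots_of_card_eq_natDegree hsplit (hpdeg ▸ hn) hr
  have hmap : f.map (Int.castRingHom ℂ) = p.map Complex.ofRealHom := by
    rw [map_map]; congr
  refine ⟨hdeg.le, ?_⟩
  rw [hmap, Real.coe_toNNReal _ (by positivity)]
  simpa [hpdeg, hlead] using
    mahlerMeasure_map_ofReal_le (splits_iff_card_roots.2 hsplit) hroots

/-- For fixed top three integer coefficients `aₙ ≠ 0, aₙ₋₁, aₙ₋₂` there are only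
finitely many integer polynomials of degree `n` with these leading coefficients all of whose
roots are real and distinct (totally real separable polynomials). -/
theorem finite_totally_real_separable_with_fixed_top_coeffs
    (n : ℕ) (hn : 2 ≤ n) (an an1 an2 : ℤ) (han : an ≠ 0) :
    {f : Polynomial ℤ | f.natDegree = n ∧ f.coeff n = an ∧ f.coeff (n - 1) = an1 ∧
      f.coeff (n - 2) = an2 ∧
      ((f.map (Int.castRingHom ℝ)).roots).card = n ∧
      (f.map (Int.castRingHom ℝ)).roots.Nodup}.Finite :=
  finite_totally_real_separable_with_fixed_top_coeffs_general n hn an an1 an2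
end

section
/- Let G be a finite group, H ≤ G, and suppose a finite Galois extension N/K of number fields has group G with L = N^H the fixed field of H. Let 𝔓 be a nonzero prime of O_N over 𝔭 ⊂ O_K with decomposition group D and inertia group I ≤ D. If g₁,…,g_m are representatives of the double cosets H\G/D, then the primes of O_L above 𝔭 are exactly 𝔭_i := g_i𝔓 ∩ O_L for 1 ≤ i ≤ m, and these are pairwise distinct. -/
open NumberField IntermediateField

section IdealHelpers

variable {R S : Type*} [CommRing R] [CommRing S] [Algebra R S]

lemma mem_map_algEquiv_iff (e : S ≃ₐ[R] S) (I : Ideal S) (y : S) :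
    y ∈ I.map e ↔ e.symm y ∈ I := by
  rw [Ideal.mem_map_of_equiv]
  constructor
  · rintro ⟨x, hx, rfl⟩; simpa using hx
  · intro h; exact ⟨e.symm y, h, e.apply_symm_apply y⟩

lemma comap_map_algEquiv (e : S ≃ₐ[R] S) (I : Ideal S) :
    (I.map e).comap (algebraMap R S) = I.comap (algebraMap R S) := by
  ext x
  rw [Ideal.mem_comap, Ideal.mem_comap, mem_map_algEquiv_iff,
    show e.symm (algebraMap R S x) = algebraMap R S x from e.symm.commutes x]

lemma map_mul_algEquiv (a b : S ≃ₐ[R] S) (I : Ideal S) :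
    I.map (a * b) = (I.map b).map a := by
  ext y
  rw [mem_map_algEquiv_iff, mem_map_algEquiv_iff, mem_map_algEquiv_iff]
  rfl

lemma map_one_algEquiv (I : Ideal S) : I.map (1 : S ≃ₐ[R] S) = I := by
  ext y
  rw [mem_map_algEquiv_iff]
  rfl

end IdealHelpers

set_option synthInstance.maxHeartbeats 1000000 in
lemma exists_galRestrict_map_eq (K N : Type*) [Field K] [Field N] [NumberField K]
    [NumberField N] [Algebra K N] [IsGalois K N]
    (P Q : Ideal (𝓞 N)) [hPp : P.IsPrime] [hQp : Q.IsPrime] (hP : P ≠ ⊥)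
    (hcom : Ideal.comap (algebraMap (𝓞 K) (𝓞 N)) Q = Ideal.comap (algebraMap (𝓞 K) (𝓞 N)) P) :
    ∃ σ : N ≃ₐ[K] N, Ideal.map (galRestrict (𝓞 K) K N (𝓞 N) σ) P = Q := by
  have hint : Algebra.IsIntegral (𝓞 K) (𝓞 N) := inferInstance
  set ρ := galRestrict (𝓞 K) K N (𝓞 N) with hρ
  have cover : (Q : Set (𝓞 N)) ⊆
      ⋃ σ ∈ ((Finset.univ : Finset (N ≃ₐ[K] N)) : Set (N ≃ₐ[K] N)),
        (Ideal.map (ρ σ) P : Set (𝓞 N)) := by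
    intro x hx
    have h1 : (∏ σ : N ≃ₐ[K] N, ρ σ x) ∈ Q := by
      classical
      rw [← Finset.mul_prod_erase Finset.univ _ (Finset.mem_univ (1 : N ≃ₐ[K] N)),
        show ρ 1 x = x by rw [map_one]; rfl]
      exact Ideal.mul_mem_right _ _ hx
    have h2 : (∏ σ : N ≃ₐ[K] N, ρ σ x) ∈ P := by
      rw [prod_galRestrict_eq_norm (𝓞 K) K N (𝓞 N) x] at h1 ⊢
      have := Ideal.mem_comap.mpr h1
      rw [hcom] at this
      exact Ideal.mem_comap.mp this
    obtain ⟨σ, -, hσ⟩ := Ideal.IsPrime.prod_mem_iff.mp h2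
    have hmem : x ∈ Ideal.map (ρ σ⁻¹) P := by
      rw [mem_map_algEquiv_iff, show (ρ σ⁻¹).symm = ρ σ by rw [map_inv]; rfl]
      exact hσ
    exact Set.mem_biUnion (by simp) hmem
  obtain ⟨σ, -, hle⟩ := (Ideal.subset_union_prime 1 1 (fun σ _ _ _ => inferInstance)).mp cover
  have hpne : Ideal.comap (algebraMap (𝓞 K) (𝓞 N)) P ≠ ⊥ := by
    obtain ⟨x, hxP, hx0⟩ := Submodule.exists_mem_ne_zero_of_ne_bot hP
    exact Ideal.comap_ne_bot_of_integral_mem hx0 hxP (Algebra.IsIntegral.isIntegral x)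
  have hpm : (Ideal.comap (algebraMap (𝓞 K) (𝓞 N)) P).IsMaximal :=
    Ideal.IsPrime.isMaximal inferInstance hpne
  have hQm : Q.IsMaximal :=
    Ideal.isMaximal_of_isIntegral_of_isMaximal_comap Q (hcom ▸ hpm)
  have hnt : Ideal.map (ρ σ) P ≠ ⊤ :=
    (Ideal.map_isPrime_of_equiv (ρ σ) (I := P)).ne_top
  exact ⟨σ, (hQm.eq_of_le hnt hle).symm⟩

set_option maxHeartbeats 1000000 in
set_option synthInstance.maxHeartbeats 1000000 in
/-- Hilbert ramification / double cosets: Let `N/K` be Galois with group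
`G`, `L = N^H` the fixed field of `H ≤ G`, `𝔓` a nonzero prime of `𝓞 N` lying over
`𝔭 = 𝔓 ∩ 𝓞 K`, with decomposition group `D`.  If `g₁, …, g_m` represent the double
cosets `H\G/D`, then the primes of `𝓞 L` above `𝔭` are exactly the `𝔭ᵢ = gᵢ𝔓 ∩ 𝓞 L`,
and these are pairwise distinct. -/
theorem primes_above_eq_double_cosets
    (K N : Type*) [Field K] [Field N] [NumberField K] [NumberField N]
    [Algebra K N] [IsGalois K N]
    (H D : Subgroup (N ≃ₐ[K] N))
    (P : Ideal (𝓞 N)) [P.IsPrime] (hP : P ≠ ⊥)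
    (hD : ∀ σ : N ≃ₐ[K] N,
      σ ∈ D ↔ Ideal.map (galRestrict (𝓞 K) K N (𝓞 N) σ) P = P)
    (m : ℕ) (g : Fin m → (N ≃ₐ[K] N))
    (hg : ∀ σ : N ≃ₐ[K] N, ∃! i : Fin m, ∃ h ∈ H, ∃ d ∈ D, σ = h * g i * d)
    (L : IntermediateField K N) (hL : L = IntermediateField.fixedField H)
    (q : Fin m → Ideal (𝓞 L))
    (hq : ∀ i, q i =
      Ideal.comap (algebraMap (𝓞 L) (𝓞 N))
        (Ideal.map (galRestrict (𝓞 K) K N (𝓞 N) (g i)) P)) :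
    (∀ Q : Ideal (𝓞 L),
        (Q.IsPrime ∧ Q ≠ ⊥ ∧
            Ideal.comap (algebraMap (𝓞 K) (𝓞 L)) Q =
              Ideal.comap (algebraMap (𝓞 K) (𝓞 N)) P) ↔ ∃ i, Q = q i) ∧
      Function.Injective q := by
  set ρ := galRestrict (𝓞 K) K N (𝓞 N) with hρ
  set ρL := galRestrict (𝓞 L) (↥L) N (𝓞 N) with hρL
  haveI hT : IsScalarTower (𝓞 K) (𝓞 L) (𝓞 N) := inferInstance
  haveI hI1 : Algebra.IsIntegral (𝓞 L) (𝓞 N) := inferInstance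
  haveI hFD : FiniteDimensional K N := inferInstance
  -- fixing subgroup of L is H
  have hfixsub : IntermediateField.fixingSubgroup L = H := by
    rw [hL]; exact IntermediateField.fixingSubgroup_fixedField H
  -- elements of H fix 𝓞 L pointwise
  have hfix : ∀ h ∈ H, ∀ x : 𝓞 L,
      ρ h (algebraMap (𝓞 L) (𝓞 N) x) = algebraMap (𝓞 L) (𝓞 N) x := by
    intro h hh x
    apply NumberField.RingOfIntegers.coe_injective
    rw [algebraMap_galRestrict_apply, ← IsScalarTower.algebraMap_apply (𝓞 L) (𝓞 N) N,
      IsScalarTower.algebraMap_apply (𝓞 L) (↥L) N]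
    exact ((IntermediateField.mem_fixingSubgroup_iff L h).mp (hfixsub ▸ hh)) _
      (algebraMap (𝓞 L) (↥L) x).2
  -- comap to 𝓞 L is unchanged by the action of H
  have hHcomap : ∀ h ∈ H, ∀ I : Ideal (𝓞 N),
      Ideal.comap (algebraMap (𝓞 L) (𝓞 N)) (Ideal.map (ρ h) I) =
        Ideal.comap (algebraMap (𝓞 L) (𝓞 N)) I := by
    intro h hh I
    ext x
    rw [Ideal.mem_comap, Ideal.mem_comap, mem_map_algEquiv_iff,
      show (ρ h).symm = ρ h⁻¹ by rw [map_inv]; rfl, hfix h⁻¹ (H.inv_mem hh) x]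
  -- comap to 𝓞 K is unchanged by any galois action
  have hKcomap : ∀ σ : N ≃ₐ[K] N, ∀ I : Ideal (𝓞 N),
      Ideal.comap (algebraMap (𝓞 K) (𝓞 N)) (Ideal.map (ρ σ) I) =
        Ideal.comap (algebraMap (𝓞 K) (𝓞 N)) I := fun σ I => comap_map_algEquiv (ρ σ) I
  have hinjLN : Function.Injective (algebraMap (𝓞 L) (𝓞 N)) := by
    intro a b hab
    have := congrArg (algebraMap (𝓞 N) N) hab
    rw [← IsScalarTower.algebraMap_apply, ← IsScalarTower.algebraMap_apply] at this
    rw [IsScalarTower.algebraMap_apply (𝓞 L) (↥L) N,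
      IsScalarTower.algebraMap_apply (𝓞 L) (↥L) N] at this
    exact NumberField.RingOfIntegers.coe_injective ((algebraMap (↥L) N).injective this)
  -- each g i P is a nonzero prime
  have hgiPrime : ∀ σ : N ≃ₐ[K] N, (Ideal.map (ρ σ) P).IsPrime :=
    fun σ => Ideal.map_isPrime_of_equiv (ρ σ) (I := P)
  have hgiNe : ∀ σ : N ≃ₐ[K] N, Ideal.map (ρ σ) P ≠ ⊥ := by
    intro σ hbot
    apply hP
    rw [eq_bot_iff]
    intro y hy
    have : ρ σ y ∈ Ideal.map (ρ σ) P := Ideal.mem_map_of_mem _ hy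
    rw [hbot, Ideal.mem_bot] at this
    have : y = 0 := by
      have := congrArg (ρ σ).symm this
      simpa using this
    simp [this]
  -- q i is a nonzero prime above 𝔭
  have hqprop : ∀ i, (q i).IsPrime ∧ q i ≠ ⊥ ∧
      Ideal.comap (algebraMap (𝓞 K) (𝓞 L)) (q i) =
        Ideal.comap (algebraMap (𝓞 K) (𝓞 N)) P := by
    intro i
    haveI := hgiPrime (g i)
    refine ⟨hq i ▸ Ideal.IsPrime.comap _, ?_, ?_⟩
    · rw [hq i]
      obtain ⟨x, hxP, hx0⟩ := Submodule.exists_mem_ne_zero_of_ne_bot (hgiNe (g i))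
      exact Ideal.comap_ne_bot_of_integral_mem hx0 hxP (Algebra.IsIntegral.isIntegral x)
    · rw [hq i, Ideal.comap_comap, ← IsScalarTower.algebraMap_eq (𝓞 K) (𝓞 L) (𝓞 N)]
      exact hKcomap (g i) P
  constructor
  · intro Q
    constructor
    · rintro ⟨Qprime, Qne, Qover⟩
      -- choose a prime of 𝓞 N above Q
      obtain ⟨Q', -, Q'prime, hQ'c⟩ :=
        Ideal.exists_ideal_over_prime_of_isIntegral (R := 𝓞 L) (S := 𝓞 N) Q ⊥
          (by intro x hx
              rw [Ideal.mem_comap, Ideal.mem_bot] at hx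
              rw [show x = 0 from hinjLN (by simpa using hx)]
              exact Q.zero_mem)
      haveI := Q'prime
      have hcomQ' : Ideal.comap (algebraMap (𝓞 K) (𝓞 N)) Q' =
          Ideal.comap (algebraMap (𝓞 K) (𝓞 N)) P := by
        have : Ideal.comap (algebraMap (𝓞 K) (𝓞 N)) Q' =
            Ideal.comap (algebraMap (𝓞 K) (𝓞 L))
              (Ideal.comap (algebraMap (𝓞 L) (𝓞 N)) Q') := by
          rw [Ideal.comap_comap, ← IsScalarTower.algebraMap_eq (𝓞 K) (𝓞 L) (𝓞 N)]
        rw [this, hQ'c, Qover]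
      obtain ⟨σ, hσ⟩ := exists_galRestrict_map_eq K N P Q' hP hcomQ'
      obtain ⟨i, ⟨h, hh, d, hd, hσeq⟩, -⟩ := hg σ
      refine ⟨i, ?_⟩
      rw [hq i, ← hQ'c, ← hσ, hσeq]
      rw [map_mul, map_mul, map_mul_algEquiv, map_mul_algEquiv, (hD d).mp hd,
        hHcomap h hh]
    · rintro ⟨i, rfl⟩
      exact hqprop i
  · -- injectivity
    intro i j hij
    have hcomeq : Ideal.comap (algebraMap (𝓞 L) (𝓞 N)) (Ideal.map (ρ (g j)) P) =
        Ideal.comap (algebraMap (𝓞 L) (𝓞 N)) (Ideal.map (ρ (g i)) P) := by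
      rw [← hq i, ← hq j, hij]
    haveI := hgiPrime (g i); haveI := hgiPrime (g j)
    obtain ⟨τ, hτ⟩ := exists_galRestrict_map_eq (↥L) N
      (Ideal.map (ρ (g i)) P) (Ideal.map (ρ (g j)) P) (hgiNe (g i)) hcomeq
    -- transfer τ to a K-automorphism in H
    set σ : N ≃ₐ[K] N := AlgEquiv.restrictScalars K τ with hσdef
    have hσH : σ ∈ H := by
      rw [← hfixsub, IntermediateField.mem_fixingSubgroup_iff]
      intro x hx
      exact τ.commutes ⟨x, hx⟩
    have hmapeq : ∀ X : Ideal (𝓞 N), Ideal.map (ρL τ) X = Ideal.map (ρ σ) X := by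
      intro X
      have hfun : ⇑(ρL τ) = ⇑(ρ σ) := by
        funext x
        apply NumberField.RingOfIntegers.coe_injective
        rw [algebraMap_galRestrict_apply, algebraMap_galRestrict_apply]
        rfl
      show Ideal.span (⇑(ρL τ) '' _) = Ideal.span (⇑(ρ σ) '' _)
      rw [hfun]
    rw [hmapeq] at hτ
    -- so map (ρ (σ * g i)) P = map (ρ (g j)) P
    have key : Ideal.map (ρ (σ * g i)) P = Ideal.map (ρ (g j)) P := by
      rw [map_mul, map_mul_algEquiv, hτ]
    have hdD : (g j)⁻¹ * (σ * g i) ∈ D := by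
      rw [hD]
      rw [map_mul, map_mul_algEquiv, key, ← map_mul_algEquiv, ← map_mul,
        inv_mul_cancel, map_one, map_one_algEquiv]
    -- now g i = σ⁻¹ * g j * ((g j)⁻¹ * (σ * g i))
    have h1 : ∃ h ∈ H, ∃ d ∈ D, g i = h * g j * d :=
      ⟨σ⁻¹, H.inv_mem hσH, (g j)⁻¹ * (σ * g i), hdD, by group⟩
    have h2 : ∃ h ∈ H, ∃ d ∈ D, g i = h * g i * d :=
      ⟨1, H.one_mem, 1, by rw [hD, map_one, map_one_algEquiv], by group⟩
    obtain ⟨k, -, huniq⟩ := hg (g i)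
    rw [huniq i h2, huniq j h1]
end
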